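/- arXiv:1605.02002 — 2 statements merged into one kernel-verified Lean document; each statement's English description precedes it below -/
import Mathlib

section
/- Let H := {(s,t) ∈ ℝ² : t > 0} and define w : H → ℝ by w(s,t) := (2/3)·Re((s+it)^{3/2}) (principal branch of the complex power). Then the map T(s,t) := (∂_s w(s,t), ∂_t w(s,t)) equals (Re (s+it)^{1/2}, −Im (s+it)^{1/2}); T is a real analytic bijection from H onto the open quarter plane Q := {(p,q) ∈ ℝ² : p > 0, q < 0}, with inverse T⁻¹(p,q) = (p² − q², −2pq); and the associated Legendre function v(p,q) := w(T⁻¹(p,q)) − (p² − q²)·p − (−2pq)·q satisfies v(p,q) = −(1/3)(p³ − 3pq²) for all (p,q) ∈ Q. -/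
/-!
With `ζ = s + it` we have `w = Re F` for the holomorphic `F(ζ) = (2/3) ζ^{3/2}`, whose derivative
is `ζ^{1/2}`; hence `∂_s w - i ∂_t w = ζ^{1/2}`, i.e. in complex notation `T ζ = conj (ζ^{1/2})`.
On the upper half plane the principal root lies in the open first quadrant, and every `u` with
`Re u > 0` is the principal root of `u²`. So `T` maps `H` bijectively onto `Q` with inverse
`u ↦ (conj u)²`, which is `(p, q) ↦ (p² - q², -2pq)`, and `w(T⁻¹(p, q)) = (2/3) Re (p - iq)³`.
-/

open Complex

noncomputable section

/-- The two-dimensional model solution `w(s,t) = (2/3) Re((s+it)^{3/2})`. -/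
def wModel : ℝ × ℝ → ℝ :=
  fun z => (2 / 3) * ((((z.1 : ℂ) + (z.2 : ℂ) * Complex.I) ^ (3 / 2 : ℂ)).re)

/-- Its partial Hodograph transform `T(s,t) = (∂_s w, ∂_t w)`. -/
def TModel : ℝ × ℝ → ℝ × ℝ :=
  fun z => (fderiv ℝ wModel z (1, 0), fderiv ℝ wModel z (0, 1))

/-- The upper half plane `H`. -/
def Hset : Set (ℝ × ℝ) := {z | 0 < z.2}

/-- The open quarter plane `Q = {p > 0, q < 0}`. -/
def Qset : Set (ℝ × ℝ) := {z | 0 < z.1 ∧ z.2 < 0}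

/-- The associated Legendre function
`v(p,q) = w(p² - q², -2pq) - (p² - q²)p - (-2pq)q`. -/
def vModel : ℝ × ℝ → ℝ :=
  fun z => wModel (z.1 ^ 2 - z.2 ^ 2, -2 * z.1 * z.2)
    - (z.1 ^ 2 - z.2 ^ 2) * z.1 - (-2 * z.1 * z.2) * z.2

open ComplexConjugate

namespace Complex

lemma re_cpow_one_half_pos {ζ : ℂ} (hζ : ζ ∈ slitPlane) : 0 < (ζ ^ (1 / 2 : ℂ)).re := by
  have hcos : 0 < Real.cos (arg ζ * (1 / 2)) := by
    have := (arg_le_pi ζ).lt_of_ne (slitPlane_arg_ne_pi hζ)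
    apply Real.cos_pos_of_mem_Ioo
    constructor <;> linarith [neg_pi_lt_arg ζ]
  have h := cpow_ofReal_re ζ (1 / 2)
  push_cast at h
  rw [h]
  exact mul_pos (Real.rpow_pos_of_pos (norm_pos_iff.mpr (slitPlane_ne_zero hζ)) _) hcos

lemma cpow_one_half_sq (ζ : ℂ) : (ζ ^ (1 / 2 : ℂ)) ^ 2 = ζ := by
  simp [one_div]

lemma im_cpow_one_half_pos {ζ : ℂ} (hζ : 0 < ζ.im) : 0 < (ζ ^ (1 / 2 : ℂ)).im := by
  have hre := re_cpow_one_half_pos (mem_slitPlane_iff.mpr (Or.inr hζ.ne'))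
  have him : ζ.im = 2 * (ζ ^ (1 / 2 : ℂ)).re * (ζ ^ (1 / 2 : ℂ)).im := by
    conv_lhs => rw [← cpow_one_half_sq ζ]
    rw [sq, mul_im]; ring
  rw [him] at hζ
  exact pos_of_mul_pos_right hζ (by positivity)

lemma sq_cpow_one_half {u : ℂ} (hu : 0 < u.re) : (u ^ 2) ^ (1 / 2 : ℂ) = u := by
  simpa [one_div] using sq_cpow_two_inv hu

lemma sq_cpow_three_halves {u : ℂ} (hu : 0 < u.re) : (u ^ 2) ^ (3 / 2 : ℂ) = u ^ 3 := by
  rw [show (3 / 2 : ℂ) = (3 : ℕ) * (1 / 2) by norm_num, cpow_nat_mul, sq_cpow_one_half hu]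

lemma hasDerivAt_cpow_three_halves {ζ : ℂ} (hζ : ζ ∈ slitPlane) :
    HasDerivAt (fun ζ : ℂ => (2 / 3 : ℂ) * ζ ^ (3 / 2 : ℂ)) (ζ ^ (1 / 2 : ℂ)) ζ := by
  refine ((hasStrictDerivAt_cpow_const hζ).hasDerivAt.const_mul (2 / 3 : ℂ)).congr_deriv ?_
  norm_num
  ring

end Complex

lemma fderiv_re_comp_equivRealProd_symm_apply {F : ℂ → ℂ} {F' : ℂ} {z : ℝ × ℝ}
    (hF : HasDerivAt F F' (equivRealProd.symm z)) (v : ℝ × ℝ) :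
    fderiv ℝ (fun p => (F (equivRealProd.symm p)).re) z v = (F' * equivRealProd.symm v).re := by
  have h := reCLM.hasFDerivAt.comp z
    (hF.complexToReal_fderiv.comp z equivRealProdCLM.symm.hasFDerivAt)
  change fderiv ℝ (reCLM ∘ F ∘ equivRealProd.symm) z v = _
  simp [h.fderiv]

lemma equivRealProd_symm_mem_slitPlane {z : ℝ × ℝ} (hz : z ∈ Hset) :
    equivRealProd.symm z ∈ slitPlane :=
  mem_slitPlane_iff.mpr (Or.inr (by simpa using hz.ne'))

lemma wModel_eq_re (z : ℝ × ℝ) :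
    wModel z = ((2 / 3 : ℂ) * equivRealProd.symm z ^ (3 / 2 : ℂ)).re := by
  simp [wModel]

lemma TModel_eq {z : ℝ × ℝ} (hz : z ∈ Hset) :
    TModel z = (((equivRealProd.symm z) ^ (1 / 2 : ℂ)).re,
      -((equivRealProd.symm z) ^ (1 / 2 : ℂ)).im) := by
  simp only [TModel, funext wModel_eq_re, fderiv_re_comp_equivRealProd_symm_apply
    (hasDerivAt_cpow_three_halves (equivRealProd_symm_mem_slitPlane hz))]
  simp

lemma equivRealProd_symm_TModel {z : ℝ × ℝ} (hz : z ∈ Hset) :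
    equivRealProd.symm (TModel z) = conj (equivRealProd.symm z ^ (1 / 2 : ℂ)) := by
  rw [TModel_eq hz]
  apply Complex.ext <;> simp

lemma TModel_mem_Qset {z : ℝ × ℝ} (hz : z ∈ Hset) : TModel z ∈ Qset := by
  have him : 0 < (equivRealProd.symm z).im := by simpa [Hset] using hz
  rw [TModel_eq hz]
  exact ⟨re_cpow_one_half_pos (equivRealProd_symm_mem_slitPlane hz),
    neg_neg_of_pos (im_cpow_one_half_pos him)⟩

lemma analyticAt_TModel {z : ℝ × ℝ} (hz : z ∈ Hset) : AnalyticAt ℝ TModel z := by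
  have hsqrt : AnalyticAt ℝ (fun p : ℝ × ℝ => equivRealProd.symm p ^ (1 / 2 : ℂ)) z :=
    (analyticAt_id.cpow analyticAt_const (equivRealProd_symm_mem_slitPlane hz)
      ).restrictScalars.comp (equivRealProdCLM.symm.analyticAt z)
  refine (((reCLM.analyticAt _).comp hsqrt).prod ((imCLM.analyticAt _).comp hsqrt).neg).congr ?_
  filter_upwards [(isOpen_lt continuous_const continuous_snd).mem_nhds hz] with p hp
  exact (TModel_eq hp).symm

def TInvModel : ℝ × ℝ → ℝ × ℝ := fun z => (z.1 ^ 2 - z.2 ^ 2, -2 * z.1 * z.2)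

lemma equivRealProd_symm_TInvModel (z : ℝ × ℝ) :
    equivRealProd.symm (TInvModel z) = conj (equivRealProd.symm z) ^ 2 := by
  apply Complex.ext
  · simp [TInvModel, sq]
  · simp [TInvModel, sq]
    ring

lemma TInvModel_mem_Hset {z : ℝ × ℝ} (hz : z ∈ Qset) : TInvModel z ∈ Hset := by
  have := mul_pos hz.1 (neg_pos.mpr hz.2)
  show 0 < -2 * z.1 * z.2
  linarith

lemma TInvModel_TModel {z : ℝ × ℝ} (hz : z ∈ Hset) : TInvModel (TModel z) = z := by
  apply equivRealProd.symm.injective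
  rw [equivRealProd_symm_TInvModel, equivRealProd_symm_TModel hz, conj_conj, cpow_one_half_sq]

lemma TModel_TInvModel {z : ℝ × ℝ} (hz : z ∈ Qset) : TModel (TInvModel z) = z := by
  apply equivRealProd.symm.injective
  rw [equivRealProd_symm_TModel (TInvModel_mem_Hset hz), equivRealProd_symm_TInvModel,
    sq_cpow_one_half (by simpa using hz.1), conj_conj]

lemma wModel_TInvModel {z : ℝ × ℝ} (hz : 0 < z.1) :
    wModel (TInvModel z) = 2 / 3 * (z.1 ^ 3 - 3 * z.1 * z.2 ^ 2) := by
  rw [wModel_eq_re, equivRealProd_symm_TInvModel, sq_cpow_three_halves (by simpa using hz)]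
  simp [pow_succ]
  ring

lemma vModel_eq {z : ℝ × ℝ} (hz : 0 < z.1) :
    vModel z = -(1 / 3) * (z.1 ^ 3 - 3 * z.1 * z.2 ^ 2) := by
  show wModel (TInvModel z) - _ - _ = _
  rw [wModel_TInvModel hz]
  ring

/-- For the two-dimensional model solution
`w(s,t) = (2/3) Re((s+it)^{3/2})` on the upper half plane `H`:
`T = (∂_s w, ∂_t w) = (Re (s+it)^{1/2}, -Im (s+it)^{1/2})` is a real analytic bijection
from `H` onto the quarter plane `Q = {p > 0, q < 0}` with inverse
`T⁻¹(p,q) = (p² - q², -2pq)`, and the Legendre function satisfies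
`v(p,q) = -(1/3)(p³ - 3pq²)` on `Q`. -/
theorem statement13 :
    (∀ z ∈ Hset, TModel z
      = (((((z.1 : ℂ) + (z.2 : ℂ) * Complex.I) ^ (1 / 2 : ℂ)).re),
         -((((z.1 : ℂ) + (z.2 : ℂ) * Complex.I) ^ (1 / 2 : ℂ)).im))) ∧
    Set.BijOn TModel Hset Qset ∧
    (∀ z ∈ Hset, AnalyticAt ℝ TModel z) ∧
    (∀ z ∈ Qset, (z.1 ^ 2 - z.2 ^ 2, -2 * z.1 * z.2) ∈ Hset ∧
      TModel (z.1 ^ 2 - z.2 ^ 2, -2 * z.1 * z.2) = z) ∧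
    (∀ z ∈ Hset,
      ((TModel z).1 ^ 2 - (TModel z).2 ^ 2, -2 * (TModel z).1 * (TModel z).2) = z) ∧
    ∀ z ∈ Qset, vModel z = -(1 / 3) * (z.1 ^ 3 - 3 * z.1 * z.2 ^ 2) := by
  have hinv : Set.InvOn TInvModel TModel Hset Qset :=
    ⟨fun _ hz => TInvModel_TModel hz, fun _ hz => TModel_TInvModel hz⟩
  refine ⟨fun z hz => by simpa using TModel_eq hz,
    hinv.bijOn (fun _ hz => TModel_mem_Qset hz) (fun _ hz => TInvModel_mem_Hset hz),
    fun _ hz => analyticAt_TModel hz,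
    fun _ hz => ⟨TInvModel_mem_Hset hz, TModel_TInvModel hz⟩,
    fun _ hz => TInvModel_TModel hz,
    fun _ hz => vModel_eq hz.1⟩

end
end

section
/- Fix n ≥ 2 and let Δ_G u := (y_n² + y_{n+1}²) Σ_{i=1}^{n-1} ∂_{ii} u + ∂_{nn} u + ∂_{n+1,n+1} u be the Baouendi–Grushin operator on ℝ^{n+1}. Let p : ℝ^{n+1} → ℝ be a polynomial each of whose monomials y^β = (y_1)^{β_1} ⋯ (y_{n+1})^{β_{n+1}} satisfies the weighted degree bound Σ_{i=1}^{n-1} 2β_i + β_n + β_{n+1} ≤ 4. Suppose Δ_G p = 0 on ℝ^{n+1}, p = 0 on {y_n = 0}, and ∂_{n+1} p = 0 on {y_{n+1} = 0}. Then there exist real constants a₀, a₁, …, a_{n-1}, b such that p(y) = a₀ y_n + Σ_{i=1}^{n-1} a_i y_i y_n + b (y_n³ − 3 y_n y_{n+1}²). In particular, there is no nonzero such solution that is weighted-homogeneous of degree 2 or of degree 4. -/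
open MeasureTheory Metric Set Filter Topology
open scoped BigOperators ENNReal NNReal

noncomputable section

/-- `ℝ^{n+1}` with the Euclidean structure. -/
abbrev Euc (n : ℕ) := EuclideanSpace ℝ (Fin (n + 1))

/-- The index of the coordinate `x_{n+1}`. -/
def idxLast (n : ℕ) : Fin (n + 1) := Fin.last n

/-- The index of the coordinate `x_n`. -/
def idxN (n : ℕ) : Fin (n + 1) := ⟨n - 1, by omega⟩

/-- The embedding of tangential indices `1, …, n-1`. -/
def idxT (n : ℕ) (i : Fin (n - 1)) : Fin (n + 1) := ⟨i.1, by have := i.2; omega⟩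

/-- The upper half ball `B_r^+(x₀)`. -/
def BplusAt (n : ℕ) (r : ℝ) (x₀ : Euc n) : Set (Euc n) :=
  Metric.ball x₀ r ∩ {x : Euc n | 0 < x (idxLast n)}

/-- The thin ball `B_r'(x₀)`. -/
def BprimeAt (n : ℕ) (r : ℝ) (x₀ : Euc n) : Set (Euc n) :=
  Metric.ball x₀ r ∩ {x : Euc n | x (idxLast n) = 0}

/-- The partial derivative `∂_i v(x)`. -/
def pd (n : ℕ) (v : Euc n → ℝ) (i : Fin (n + 1)) (x : Euc n) : ℝ :=
  fderiv ℝ v x (EuclideanSpace.single i 1)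

/-- The second partial derivative `∂_{ij} v = ∂_j ∂_i v`. -/
def pd2 (n : ℕ) (v : Euc n → ℝ) (i j : Fin (n + 1)) (x : Euc n) : ℝ :=
  pd n (pd n v i) j x

/-- Assembling a point of `ℝ^{n+1}` from a tangential part `u ∈ ℝ^{n-1}` and
the values `s`, `t` of the coordinates `x_n` and `x_{n+1}`. -/
def put (n : ℕ) (u : EuclideanSpace ℝ (Fin (n - 1))) (s t : ℝ) : Euc n :=
  (EuclideanSpace.equiv (Fin (n + 1)) ℝ).symm fun i =>
    if h : i.1 < n - 1 then u ⟨i.1, h⟩ else if i.1 = n - 1 then s else t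

/-- The tangential projection `x ↦ x''`. -/
def proj'' (n : ℕ) (x : Euc n) : EuclideanSpace ℝ (Fin (n - 1)) :=
  (EuclideanSpace.equiv (Fin (n - 1)) ℝ).symm fun j => x (idxT n j)

/-- The Signorini energy `J(v) = ∫_{B_1^+} (aᵢⱼ ∂ᵢv ∂ⱼv + 2 f v)`. -/
def signoriniEnergy (n : ℕ) (a : Fin (n + 1) → Fin (n + 1) → Euc n → ℝ) (f : Euc n → ℝ)
    (v : Euc n → ℝ) : ℝ :=
  ∫ x in BplusAt n 1 0, ((∑ i, ∑ j, a i j x * pd n v i x * pd n v j x) + 2 * f x * v x)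

/-- `w` is a solution of the thin obstacle (Signorini) problem on `B_1^+` with metric `a`
and inhomogeneity `f`: it is `C¹` on `closure (B_1^+)`, nonnegative on `B_1'`, and a local
minimizer of the Signorini energy among admissible competitors. -/
structure IsSignoriniSolution (n : ℕ) (a : Fin (n + 1) → Fin (n + 1) → Euc n → ℝ)
    (f : Euc n → ℝ) (w : Euc n → ℝ) : Prop where
  contDiffOn : ContDiffOn ℝ 1 w (closure (BplusAt n 1 0))
  nonneg : ∀ x ∈ BprimeAt n 1 0, 0 ≤ w x
  isMinimizer : ∀ v : Euc n → ℝ, ContDiffOn ℝ 1 v (closure (BplusAt n 1 0)) →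
    (∀ x ∈ BprimeAt n 1 0, 0 ≤ v x) →
    tsupport (fun x => v x - w x) ⊆ Metric.ball (0 : Euc n) 1 →
    signoriniEnergy n a f w ≤ signoriniEnergy n a f v

/-- The contact set `Λ_w`. -/
def contactSet (n : ℕ) (w : Euc n → ℝ) : Set (Euc n) :=
  {x ∈ BprimeAt n 1 0 | w x = 0}

/-- The free boundary `Γ_w`, i.e. the topological boundary of `Λ_w` relative to `B_1'`. -/
def freeBoundary (n : ℕ) (w : Euc n → ℝ) : Set (Euc n) :=
  {x ∈ BprimeAt n 1 0 |
    x ∈ closure (contactSet n w) ∧ x ∈ closure (BprimeAt n 1 0 \ contactSet n w)}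

/-- The order of vanishing of `w` at `x₀` equals `κ`. -/
def HasVanishingOrder (n : ℕ) (w : Euc n → ℝ) (x₀ : Euc n) (κ : ℝ) : Prop :=
  Tendsto (fun r : ℝ =>
      Real.log (r ^ (-(((n : ℝ) + 1) / 2)) * Real.sqrt (∫ x in BplusAt n r x₀, (w x) ^ 2))
        / Real.log r)
    (nhdsWithin 0 (Set.Ioi 0)) (nhds κ)

/-- The regular free boundary `Γ_{3/2}(w)`. -/
def regularFreeBoundary (n : ℕ) (w : Euc n → ℝ) : Set (Euc n) :=
  {x ∈ freeBoundary n w | HasVanishingOrder n w x (3 / 2)}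

/-- `g : ℝ^{n-1} → ℝ` is of class `C^{m,β}`: `m` times continuously differentiable and,
if `β > 0`, with `β`-Hölder continuous `m`-th derivatives. -/
def CHolderFun (n m : ℕ) (β : ℝ) (g : EuclideanSpace ℝ (Fin (n - 1)) → ℝ) : Prop :=
  ContDiff ℝ m g ∧
    (0 < β → ∃ C : ℝ≥0, HolderWith C β.toNNReal (iteratedFDeriv ℝ m g))

/-- The graph `{(x'', g(x''), 0)}` of `g` inside `ℝ^{n+1}`. -/
def graphSet (n : ℕ) (g : EuclideanSpace ℝ (Fin (n - 1)) → ℝ) : Set (Euc n) :=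
  {x : Euc n | ∃ x'' : EuclideanSpace ℝ (Fin (n - 1)), x = put n x'' (g x'') 0}

/-- The regular free boundary of `w` is locally a `C^{m,β}` graph. -/
def IsLocallyCGraph (n : ℕ) (w : Euc n → ℝ) (m : ℕ) (β : ℝ) : Prop :=
  ∀ x₀ ∈ regularFreeBoundary n w, ∃ r > (0 : ℝ), ∃ Q : Euc n ≃ₗᵢ[ℝ] Euc n,
    LinearMap.det Q.toLinearEquiv.toLinearMap = 1 ∧
    Q (EuclideanSpace.single (idxLast n) 1) = EuclideanSpace.single (idxLast n) 1 ∧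
    ∃ g : EuclideanSpace ℝ (Fin (n - 1)) → ℝ, CHolderFun n m β g ∧
      (Q '' ((fun x => x - x₀) '' freeBoundary n w)) ∩ Metric.ball 0 r
        = graphSet n g ∩ Metric.ball 0 r

/-- The regular free boundary of `w` is locally a real analytic graph. -/
def IsLocallyAnalyticGraph (n : ℕ) (w : Euc n → ℝ) : Prop :=
  ∀ x₀ ∈ regularFreeBoundary n w, ∃ r > (0 : ℝ), ∃ Q : Euc n ≃ₗᵢ[ℝ] Euc n,
    LinearMap.det Q.toLinearEquiv.toLinearMap = 1 ∧
    Q (EuclideanSpace.single (idxLast n) 1) = EuclideanSpace.single (idxLast n) 1 ∧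
    ∃ g : EuclideanSpace ℝ (Fin (n - 1)) → ℝ, (∀ z, AnalyticAt ℝ g z) ∧
      (Q '' ((fun x => x - x₀) '' freeBoundary n w)) ∩ Metric.ball 0 r
        = graphSet n g ∩ Metric.ball 0 r

/-- The coefficient field is symmetric. -/
def SymmCoeff (n : ℕ) (a : Fin (n + 1) → Fin (n + 1) → Euc n → ℝ) : Prop :=
  ∀ i j x, a i j x = a j i x

/-- The coefficient field is uniformly elliptic on `closure (B_1^+)`. -/
def UnifElliptic (n : ℕ) (a : Fin (n + 1) → Fin (n + 1) → Euc n → ℝ) : Prop :=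
  ∃ lam Lam : ℝ, 0 < lam ∧ lam ≤ Lam ∧
    ∀ x ∈ closure (BplusAt n 1 0), ∀ ξ : Euc n,
      lam * ‖ξ‖ ^ 2 ≤ (∑ i, ∑ j, a i j x * ξ i * ξ j) ∧
      (∑ i, ∑ j, a i j x * ξ i * ξ j) ≤ Lam * ‖ξ‖ ^ 2

/-- `G` is the weak gradient of `u` on `B_1^+`. -/
def HasWeakGradient (n : ℕ) (u : Euc n → ℝ) (G : Euc n → Euc n) : Prop :=
  ∀ φ : Euc n → ℝ, ContDiff ℝ (⊤ : ℕ∞) φ → tsupport φ ⊆ BplusAt n 1 0 →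
    ∀ k : Fin (n + 1),
      ∫ x in BplusAt n 1 0, u x * pd n φ k x
        = - ∫ x in BplusAt n 1 0, G x k * φ x

/-- `u ∈ W^{1,p}(B_1^+)` for `p ∈ (n+1, ∞]` : for `p < ∞`, `u` is continuous up to the
boundary with a weak gradient in `L^p`; for `p = ∞`, `u` is Lipschitz on `B_1^+`. -/
def MemW1p (n : ℕ) (p : ℝ≥0∞) (u : Euc n → ℝ) : Prop :=
  if p = ∞ then ∃ K : ℝ≥0, LipschitzOnWith K u (BplusAt n 1 0)
  else ContinuousOn u (closure (BplusAt n 1 0)) ∧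
    ∃ G : Euc n → Euc n, HasWeakGradient n u G ∧
      MemLp G p (volume.restrict (BplusAt n 1 0))

/-- `u` is of class `C^{k,γ}` on `closure (B_1^+)`. -/
def CHolderOnClosure (n k : ℕ) (γ : ℝ) (u : Euc n → ℝ) : Prop :=
  ContDiffOn ℝ k u (closure (BplusAt n 1 0)) ∧
    ∃ C : ℝ≥0, HolderOnWith C γ.toNNReal
      (iteratedFDerivWithin ℝ k u (closure (BplusAt n 1 0))) (closure (BplusAt n 1 0))


/-- The Baouendi–Grushin operator
`Δ_G u = (y_n² + y_{n+1}²) Σᵢ ∂_{ii} u + ∂_{nn} u + ∂_{n+1,n+1} u`. -/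
def GrushinOp (n : ℕ) (u : Euc n → ℝ) (y : Euc n) : ℝ :=
  ((y (idxN n)) ^ 2 + (y (idxLast n)) ^ 2)
      * (∑ i : Fin (n - 1), pd2 n u (idxT n i) (idxT n i) y)
    + pd2 n u (idxN n) (idxN n) y + pd2 n u (idxLast n) (idxLast n) y

/-- The weighted (Grushin) degree of a monomial exponent `β`:
`Σᵢ 2βᵢ + β_n + β_{n+1}`. -/
def wdeg (n : ℕ) (β : Fin (n + 1) →₀ ℕ) : ℕ :=
  (∑ i : Fin (n - 1), 2 * β (idxT n i)) + β (idxN n) + β (idxLast n)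


namespace Statement15Aux

open MvPolynomial Finsupp

lemma idxN_ne_idxLast {n : ℕ} (hn : 2 ≤ n) : idxN n ≠ idxLast n :=
  Fin.ne_of_val_ne (show n - 1 ≠ n by omega)

lemma idxT_ne_idxN {n : ℕ} (i : Fin (n - 1)) : idxT n i ≠ idxN n :=
  Fin.ne_of_val_ne (show (i : ℕ) ≠ n - 1 by have := i.2; omega)

lemma idxT_ne_idxLast {n : ℕ} (i : Fin (n - 1)) : idxT n i ≠ idxLast n :=
  Fin.ne_of_val_ne (show (i : ℕ) ≠ n by have := i.2; omega)

lemma idxT_inj {n : ℕ} (i j : Fin (n - 1)) : idxT n i = idxT n j ↔ i = j := by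
  simp [idxT, Fin.ext_iff]

lemma idx_cases {n : ℕ} (hn : 2 ≤ n) (j : Fin (n + 1)) :
    (∃ i : Fin (n - 1), j = idxT n i) ∨ j = idxN n ∨ j = idxLast n := by
  rcases lt_trichotomy j.1 (n - 1) with h | h | h
  · exact Or.inl ⟨⟨j.1, h⟩, by simp [idxT, Fin.ext_iff]⟩
  · exact Or.inr (Or.inl (by simp [idxN, Fin.ext_iff, h]))
  · refine Or.inr (Or.inr ?_)
    have := j.2
    simp only [idxLast, Fin.ext_iff, Fin.last]
    omega

lemma finsupp_eq_of_idx {n : ℕ} (hn : 2 ≤ n) (γ δ : Fin (n + 1) →₀ ℕ)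
    (hT : ∀ i, γ (idxT n i) = δ (idxT n i)) (hN : γ (idxN n) = δ (idxN n))
    (hL : γ (idxLast n) = δ (idxLast n)) : γ = δ := by
  ext j
  rcases idx_cases hn j with ⟨i, rfl⟩ | rfl | rfl
  · exact hT i
  · exact hN
  · exact hL

lemma hasFDerivAt_evalFun (n : ℕ) (P : MvPolynomial (Fin (n + 1)) ℝ) (y : Euc n) :
    HasFDerivAt (fun x : Euc n => eval (fun i => x i) P)
      (∑ j, eval (fun i => y i) (pderiv j P) • (EuclideanSpace.proj j : Euc n →L[ℝ] ℝ)) y := by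
  induction P using MvPolynomial.induction_on with
  | C a =>
      simpa using hasFDerivAt_const (eval (fun i => y i) (C a : MvPolynomial (Fin (n + 1)) ℝ)) y
  | add p q hp hq =>
      have := hp.add hq
      simp only [map_add, add_smul, Finset.sum_add_distrib] at *
      exact this
  | mul_X p i₀ hp =>
      have hX : HasFDerivAt (fun x : Euc n => x i₀) (EuclideanSpace.proj i₀ : Euc n →L[ℝ] ℝ) y :=
        (EuclideanSpace.proj i₀ : Euc n →L[ℝ] ℝ).hasFDerivAt
      have h := hp.mul hX
      have heq : (fun x : Euc n => eval (fun i => x i) (p * X i₀))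
          = fun x : Euc n => eval (fun i => x i) p * x i₀ := by
        funext x; simp
      rw [heq]
      refine HasFDerivAt.congr_fderiv h ?_
      simp only [pderiv_mul, map_add, map_mul, eval_X, pderiv_X, Pi.single_apply,
        apply_ite (eval fun i => y i), map_one, map_zero, mul_ite, mul_one, mul_zero,
        add_smul, ite_smul, zero_smul, Finset.sum_add_distrib, Finset.sum_ite_eq,
        Finset.mem_univ, if_true]
      have hA : ∑ j : Fin (n + 1), ((eval fun i => y i) ((pderiv j) p) * y i₀)
              • (EuclideanSpace.proj j : Euc n →L[ℝ] ℝ)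
          = y i₀ • ∑ j : Fin (n + 1), (eval fun i => y i) ((pderiv j) p)
              • (EuclideanSpace.proj j : Euc n →L[ℝ] ℝ) := by
        rw [Finset.smul_sum]
        exact Finset.sum_congr rfl fun j _ => by rw [mul_comm, mul_smul]
      rw [hA]; exact add_comm _ _

lemma pd_evalFun (n : ℕ) (P : MvPolynomial (Fin (n + 1)) ℝ) (i : Fin (n + 1)) :
    pd n (fun x : Euc n => eval (fun j => x j) P) i
      = fun y : Euc n => eval (fun j => y j) (pderiv i P) := by
  funext y
  rw [pd, (hasFDerivAt_evalFun n P y).fderiv]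
  simp only [ContinuousLinearMap.sum_apply, ContinuousLinearMap.smul_apply,
    PiLp.proj_apply, EuclideanSpace.single_apply, smul_eq_mul, mul_ite, mul_one,
    mul_zero, Finset.sum_ite_eq', Finset.mem_univ, if_true]

lemma pd2_evalFun (n : ℕ) (P : MvPolynomial (Fin (n + 1)) ℝ) (i j : Fin (n + 1)) (y : Euc n) :
    pd2 n (fun x : Euc n => eval (fun k => x k) P) i j y
      = eval (fun k => y k) (pderiv j (pderiv i P)) := by
  rw [pd2, pd_evalFun, pd_evalFun]

lemma poly_eq_zero_of_evalEuc (n : ℕ) (Q : MvPolynomial (Fin (n + 1)) ℝ)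
    (h : ∀ y : Euc n, eval (fun i => y i) Q = 0) : Q = 0 := by
  apply MvPolynomial.funext
  intro σ
  have := h ((EuclideanSpace.equiv (Fin (n + 1)) ℝ).symm σ)
  simpa using this

lemma coeff_pderiv {σ : Type*} [DecidableEq σ] (i : σ) (P : MvPolynomial σ ℝ) (γ : σ →₀ ℕ) :
    coeff γ (pderiv i P) = (γ i + 1 : ℕ) * coeff (γ + Finsupp.single i 1) P := by
  induction P using MvPolynomial.induction_on' with
  | add p q hp hq => simp [map_add, coeff_add, hp, hq, mul_add]
  | monomial s a =>
      rw [pderiv_monomial]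
      simp only [coeff_monomial]
      by_cases h : s = γ + Finsupp.single i 1
      · subst h
        have h1 : γ + Finsupp.single i 1 - Finsupp.single i 1 = γ := by
          ext j; simp [Finsupp.single_apply]
        rw [if_pos h1]
        simp [Finsupp.single_apply, mul_comm]
      · rw [if_neg h]
        by_cases h2 : s - Finsupp.single i 1 = γ
        · rw [if_pos h2]
          have hsi : s i = 0 := by
            by_contra hsi
            apply h
            rw [← h2]
            ext j
            rcases eq_or_ne j i with rfl | hj
            · simp [Finsupp.single_apply]; omega
            · simp [Finsupp.single_apply, Ne.symm hj]
          simp [hsi]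
        · rw [if_neg h2]; ring

lemma coeff_bind1_zeroN {σ : Type*} [DecidableEq σ] (N : σ) (P : MvPolynomial σ ℝ)
    (β : σ →₀ ℕ) (hβ : β N = 0) :
    coeff β (bind₁ (fun i => if i = N then 0 else X i) P) = coeff β P := by
  induction P using MvPolynomial.induction_on' with
  | add p q hp hq => simp [map_add, coeff_add, hp, hq]
  | monomial s a =>
      rw [bind₁_monomial]
      by_cases hs : s N = 0
      · have heq : ∏ j ∈ s.support, (if j = N then (0 : MvPolynomial σ ℝ) else X j) ^ s j
            = ∏ j ∈ s.support, (X j) ^ s j := by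
          apply Finset.prod_congr rfl
          intro j hj
          have : j ≠ N := fun h => by
            apply Finsupp.mem_support_iff.mp hj; rw [h, hs]
          rw [if_neg this]
        rw [heq, monomial_eq, Finsupp.prod]
      · have hN : N ∈ s.support := Finsupp.mem_support_iff.mpr hs
        rw [Finset.prod_eq_zero hN (by simp [zero_pow hs])]
        rw [mul_zero, coeff_zero, coeff_monomial, if_neg]
        intro h; rw [← h] at hβ; exact hs hβ

lemma vanishing_coeff (n : ℕ) (idx : Fin (n + 1)) (Q : MvPolynomial (Fin (n + 1)) ℝ)
    (h : ∀ y : Euc n, y idx = 0 → eval (fun i => y i) Q = 0) :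
    ∀ β : Fin (n + 1) →₀ ℕ, β idx = 0 → coeff β Q = 0 := by
  intro β hβ
  have hz : bind₁ (fun i => if i = idx then 0 else X i) Q = 0 := by
    apply poly_eq_zero_of_evalEuc
    intro y
    have h1 : ∀ (q : MvPolynomial (Fin (n + 1)) ℝ) (τ : Fin (n + 1) → ℝ),
        eval τ q = aeval τ q := fun q τ => by rw [← coe_aeval_eq_eval]; rfl
    rw [h1, aeval_bind₁]
    have h2 : (fun i => aeval (fun i => (y : Euc n) i)
          (if i = idx then (0 : MvPolynomial (Fin (n + 1)) ℝ) else X i))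
        = fun i => if i = idx then 0 else y i := by
      funext i; split <;> simp
    rw [h2]
    set y' : Euc n := (EuclideanSpace.equiv (Fin (n + 1)) ℝ).symm
      (fun i => if i = idx then 0 else y i) with hy'
    have h0 : y' idx = 0 := by simp [hy']
    have h3 : (fun i => y' i) = fun i => if i = idx then 0 else y i := by
      funext i; simp [hy']
    rw [← h1, ← h3]
    exact h y' h0
  rw [← coeff_bind1_zeroN idx Q β hβ, hz, coeff_zero]

end Statement15Aux

/-- Classification of the polynomial solutions of the Baouendi–Grushin
equation with mixed Dirichlet–Neumann conditions of weighted degree at most 4: every such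
polynomial is of the form `a₀ y_n + Σᵢ aᵢ yᵢ y_n + b (y_n³ - 3 y_n y_{n+1}²)`.
In particular there is no nonzero such solution which is weighted-homogeneous of degree
2 or of degree 4. -/
theorem statement15 (n : ℕ) (hn : 2 ≤ n) (P : MvPolynomial (Fin (n + 1)) ℝ)
    (hdeg : ∀ β ∈ P.support, wdeg n β ≤ 4)
    (hharm : ∀ y : Euc n,
      GrushinOp n (fun x => MvPolynomial.eval (fun i => x i) P) y = 0)
    (hdir : ∀ y : Euc n, y (idxN n) = 0 → MvPolynomial.eval (fun i => y i) P = 0)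
    (hneu : ∀ y : Euc n, y (idxLast n) = 0 →
      pd n (fun x => MvPolynomial.eval (fun i => x i) P) (idxLast n) y = 0) :
    (∃ (a₀ : ℝ) (a : Fin (n - 1) → ℝ) (b : ℝ), ∀ y : Euc n,
      MvPolynomial.eval (fun i => y i) P
        = a₀ * y (idxN n) + (∑ i, a i * y (idxT n i) * y (idxN n))
          + b * ((y (idxN n)) ^ 3 - 3 * y (idxN n) * (y (idxLast n)) ^ 2)) ∧
    ((∀ β ∈ P.support, wdeg n β = 2) → P = 0) ∧
    ((∀ β ∈ P.support, wdeg n β = 4) → P = 0) := by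
  classical
  obtain ⟨N, hNdef⟩ : ∃ N, N = idxN n := ⟨_, rfl⟩
  obtain ⟨L, hLdef⟩ : ∃ L, L = idxLast n := ⟨_, rfl⟩
  obtain ⟨T, hTdef⟩ : ∃ T, T = idxT n := ⟨_, rfl⟩
  have hNL : N ≠ L := hNdef ▸ hLdef ▸ Statement15Aux.idxN_ne_idxLast hn
  have hLN : L ≠ N := hNL.symm
  have hTN : ∀ i, T i ≠ N := fun i => hNdef ▸ hTdef ▸ Statement15Aux.idxT_ne_idxN i
  have hNT : ∀ i, N ≠ T i := fun i => (hTN i).symm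
  have hTL : ∀ i, T i ≠ L := fun i => hLdef ▸ hTdef ▸ Statement15Aux.idxT_ne_idxLast i
  have hLT : ∀ i, L ≠ T i := fun i => (hTL i).symm
  have hTT : ∀ i j, T i = T j ↔ i = j := fun i j => hTdef ▸ Statement15Aux.idxT_inj i j
  -- exponent abbreviations
  set eN : Fin (n + 1) →₀ ℕ := Finsupp.single N 1 with heN
  set eL : Fin (n + 1) →₀ ℕ := Finsupp.single L 1 with heL
  -- Dirichlet on coefficients
  have hN1 : ∀ β : Fin (n + 1) →₀ ℕ, β N = 0 → MvPolynomial.coeff β P = 0 := by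
    rw [hNdef]; exact Statement15Aux.vanishing_coeff n (idxN n) P hdir
  -- Neumann on coefficients
  have hneu' : ∀ y : Euc n, y (idxLast n) = 0 →
      MvPolynomial.eval (fun i => y i) (MvPolynomial.pderiv (idxLast n) P) = 0 := by
    intro y hy
    have h := hneu y hy
    rw [Statement15Aux.pd_evalFun] at h
    exact h
  have hL1 : ∀ β : Fin (n + 1) →₀ ℕ, β L = 1 → MvPolynomial.coeff β P = 0 := by
    intro β hβ
    have h0 : ((β - eL : Fin (n + 1) →₀ ℕ)) L = 0 := by
      simp [heL, Finsupp.tsub_apply, Finsupp.single_apply, hβ]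
    have hv := Statement15Aux.vanishing_coeff n (idxLast n) _ hneu' (β - eL) (by rw [← hLdef]; exact h0)
    rw [← hLdef] at hv
    rw [Statement15Aux.coeff_pderiv] at hv
    have hadd : (β - eL) + Finsupp.single L 1 = β := by
      ext j
      rcases eq_or_ne j L with rfl | hj
      · simp [heL, Finsupp.tsub_apply, Finsupp.single_apply, hβ]
      · simp [heL, Finsupp.tsub_apply, Finsupp.single_apply, Ne.symm hj]
    rw [hadd, h0] at hv
    simpa using hv
  -- monomials with a tangential exponent ≥ 2 vanish
  have hsupzero : ∀ β : Fin (n + 1) →₀ ℕ, (∃ i, 2 ≤ β (T i)) → MvPolynomial.coeff β P = 0 := by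
    rintro β ⟨i, hi⟩
    by_contra hc
    have hmem : β ∈ P.support := MvPolynomial.mem_support_iff.mpr hc
    have hw := hdeg β hmem
    have hNpos : β N ≠ 0 := fun h0 => hc (hN1 β h0)
    have hlow : 2 * β (T i) ≤ ∑ j : Fin (n - 1), 2 * β (idxT n j) := by
      rw [← hTdef]
      exact Finset.single_le_sum (f := fun j => 2 * β (T j)) (fun _ _ => Nat.zero_le _)
        (Finset.mem_univ i)
    unfold wdeg at hw
    rw [← hNdef, ← hLdef] at hw
    omega
  have hT2 : ∀ i : Fin (n - 1),
      MvPolynomial.pderiv (T i) (MvPolynomial.pderiv (T i) P) = 0 := by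
    intro i
    apply MvPolynomial.ext
    intro γ
    rw [Statement15Aux.coeff_pderiv, Statement15Aux.coeff_pderiv, MvPolynomial.coeff_zero]
    have hz : MvPolynomial.coeff (γ + Finsupp.single (T i) 1 + Finsupp.single (T i) 1) P = 0 := by
      apply hsupzero
      exact ⟨i, by simp [Finsupp.add_apply, Finsupp.single_apply]⟩
    rw [hz, mul_zero, mul_zero]
  -- harmonicity: the polynomial identity
  have hD : MvPolynomial.pderiv N (MvPolynomial.pderiv N P)
      + MvPolynomial.pderiv L (MvPolynomial.pderiv L P) = 0 := by
    apply Statement15Aux.poly_eq_zero_of_evalEuc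
    intro y
    have h := hharm y
    unfold GrushinOp at h
    rw [Statement15Aux.pd2_evalFun, Statement15Aux.pd2_evalFun] at h
    have hsz : ∑ i : Fin (n - 1),
        pd2 n (fun x => MvPolynomial.eval (fun i => x i) P) (idxT n i) (idxT n i) y = 0 := by
      apply Finset.sum_eq_zero
      intro i _
      rw [Statement15Aux.pd2_evalFun, ← hTdef, hT2 i]
      simp
    rw [hsz, mul_zero, zero_add] at h
    rw [← hNdef, ← hLdef] at h
    rw [map_add]
    exact h
  have h4 : ∀ γ : Fin (n + 1) →₀ ℕ,
      ((γ N + 1 : ℕ) : ℝ) * ((γ N + 2 : ℕ) : ℝ) * MvPolynomial.coeff (γ + eN + eN) P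
        + ((γ L + 1 : ℕ) : ℝ) * ((γ L + 2 : ℕ) : ℝ) * MvPolynomial.coeff (γ + eL + eL) P = 0 := by
    intro γ
    have h := congrArg (MvPolynomial.coeff γ) hD
    rw [MvPolynomial.coeff_add, MvPolynomial.coeff_zero, Statement15Aux.coeff_pderiv,
      Statement15Aux.coeff_pderiv, Statement15Aux.coeff_pderiv, Statement15Aux.coeff_pderiv] at h
    have e1 : ((γ + Finsupp.single N 1 : Fin (n + 1) →₀ ℕ)) N = γ N + 1 := by
      simp [Finsupp.add_apply, Finsupp.single_apply]
    have e2 : ((γ + Finsupp.single L 1 : Fin (n + 1) →₀ ℕ)) L = γ L + 1 := by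
      simp [Finsupp.add_apply, Finsupp.single_apply]
    rw [e1, e2] at h
    rw [heN, heL]
    push_cast at h ⊢
    linear_combination h
  -- derived coefficient facts
  have hvN : ∀ γ : Fin (n + 1) →₀ ℕ, ((γ + eN : Fin (n + 1) →₀ ℕ)) N = γ N + 1 := fun γ => by
    simp [heN, Finsupp.add_apply, Finsupp.single_apply]
  have z1 : MvPolynomial.coeff (eN + eN) P = 0 := by
    have h := h4 0
    simp only [zero_add] at h
    have hz : MvPolynomial.coeff (eL + eL) P = 0 := by
      apply hN1
      simp [heL, Finsupp.add_apply, Finsupp.single_apply, hLN]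
    rw [hz] at h
    push_cast at h
    simp only [Finsupp.coe_zero, Pi.zero_apply] at h
    norm_num at h
    linarith [h]
  have rel : MvPolynomial.coeff (eN + eL + eL) P
      = -3 * MvPolynomial.coeff (eN + eN + eN) P := by
    have h := h4 eN
    have hN' : eN N = 1 := by simp [heN, Finsupp.single_apply]
    have hL' : eN L = 0 := by simp [heN, Finsupp.single_apply, hNL]
    rw [hN', hL'] at h
    push_cast at h
    norm_num at h
    linarith [h]
  have z2 : MvPolynomial.coeff (eN + eN + eL + eL) P = 0 := by
    have h := h4 (eL + eL)
    have hN' : ((eL + eL : Fin (n + 1) →₀ ℕ)) N = 0 := by simp [heL, Finsupp.add_apply, Finsupp.single_apply, hLN]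
    have hL' : ((eL + eL : Fin (n + 1) →₀ ℕ)) L = 2 := by simp [heL, Finsupp.add_apply, Finsupp.single_apply]
    rw [hN', hL'] at h
    have hz : MvPolynomial.coeff (eL + eL + eL + eL) P = 0 := by
      apply hN1
      simp [heL, Finsupp.add_apply, Finsupp.single_apply, hLN]
    rw [hz] at h
    have hcomm : eL + eL + eN + eN = eN + eN + eL + eL := by abel
    rw [hcomm] at h
    push_cast at h
    norm_num at h
    linarith [h]
  have z3 : MvPolynomial.coeff (eN + eN + eN + eN) P = 0 := by
    have h := h4 (eN + eN)
    have hN' : ((eN + eN : Fin (n + 1) →₀ ℕ)) N = 2 := by simp [heN, Finsupp.add_apply, Finsupp.single_apply]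
    have hL' : ((eN + eN : Fin (n + 1) →₀ ℕ)) L = 0 := by simp [heN, Finsupp.add_apply, Finsupp.single_apply, hNL]
    rw [hN', hL', z2] at h
    push_cast at h
    norm_num at h
    linarith [h]
  have z4 : MvPolynomial.coeff (eN + eL + eL + eL) P = 0 := by
    have h := h4 (eN + eL)
    have hN' : ((eN + eL : Fin (n + 1) →₀ ℕ)) N = 1 := by
      simp [heN, heL, Finsupp.add_apply, Finsupp.single_apply, hLN]
    have hL' : ((eN + eL : Fin (n + 1) →₀ ℕ)) L = 1 := by
      simp [heN, heL, Finsupp.add_apply, Finsupp.single_apply, hNL]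
    rw [hN', hL'] at h
    have hz : MvPolynomial.coeff (eN + eL + eN + eN) P = 0 := by
      apply hL1
      simp [heN, heL, Finsupp.add_apply, Finsupp.single_apply, hNL]
    rw [hz] at h
    push_cast at h
    norm_num at h
    linarith [h]
  have z5 : ∀ i : Fin (n - 1),
      MvPolynomial.coeff (Finsupp.single (T i) 1 + eN + eN) P = 0 := by
    intro i
    have h := h4 (Finsupp.single (T i) 1)
    have hN' : ((Finsupp.single (T i) 1 : Fin (n + 1) →₀ ℕ)) N = 0 := by simp [Finsupp.single_apply, hTN i]
    have hL' : ((Finsupp.single (T i) 1 : Fin (n + 1) →₀ ℕ)) L = 0 := by simp [Finsupp.single_apply, hTL i]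
    rw [hN', hL'] at h
    have hz : MvPolynomial.coeff (Finsupp.single (T i) 1 + eL + eL) P = 0 := by
      apply hN1
      simp [heL, Finsupp.add_apply, Finsupp.single_apply, hTN i, hLN]
    rw [hz] at h
    push_cast at h
    norm_num at h
    linarith [h]
    -- ext helper in terms of T, N, L
  have fei : ∀ γ δ : Fin (n + 1) →₀ ℕ, (∀ i, γ (T i) = δ (T i)) → γ N = δ N → γ L = δ L →
      γ = δ := by
    intro γ δ h1 h2 h3
    exact Statement15Aux.finsupp_eq_of_idx hn γ δ
      (fun i => by rw [← hTdef]; exact h1 i) (by rw [← hNdef]; exact h2)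
      (by rw [← hLdef]; exact h3)
  -- classification of the support
  have hclass : ∀ γ ∈ P.support, γ = eN ∨ (∃ i, γ = Finsupp.single (T i) 1 + eN)
      ∨ γ = eN + eN + eN ∨ γ = eN + eL + eL := by
    intro γ hγ
    have hc : MvPolynomial.coeff γ P ≠ 0 := MvPolynomial.mem_support_iff.mp hγ
    have hw := hdeg γ hγ
    unfold wdeg at hw
    rw [← hNdef, ← hLdef, ← hTdef] at hw
    have hNpos : 1 ≤ γ N := Nat.one_le_iff_ne_zero.mpr fun h0 => hc (hN1 γ h0)
    have hLne : γ L ≠ 1 := fun h1 => hc (hL1 γ h1)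
    have hsum2 : ∑ j : Fin (n - 1), 2 * γ (T j) = 2 * ∑ j : Fin (n - 1), γ (T j) := by
      rw [Finset.mul_sum]
    rw [hsum2] at hw
    have hsle : (∑ j : Fin (n - 1), γ (T j)) = 0 ∨ (∑ j : Fin (n - 1), γ (T j)) = 1 := by omega
    rcases hsle with hs0 | hs1
    · -- no tangential variable
      have hTz : ∀ j, γ (T j) = 0 := fun j =>
        (Finset.sum_eq_zero_iff.mp hs0) j (Finset.mem_univ j)
      rw [hs0] at hw
      have hkey : (γ N = 1 ∧ γ L = 0) ∨ (γ N = 3 ∧ γ L = 0) ∨ (γ N = 1 ∧ γ L = 2)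
          ∨ (γ N = 2 ∧ γ L = 0) ∨ (γ N = 4 ∧ γ L = 0) ∨ (γ N = 2 ∧ γ L = 2)
          ∨ (γ N = 1 ∧ γ L = 3) := by omega
      rcases hkey with ⟨h1, h2⟩ | ⟨h1, h2⟩ | ⟨h1, h2⟩ | ⟨h1, h2⟩ | ⟨h1, h2⟩ | ⟨h1, h2⟩ | ⟨h1, h2⟩
      · left
        apply fei <;>
          simp [heN, Finsupp.single_apply, Finsupp.add_apply, hNT, hNL, hTz, h1, h2]
      · right; right; left
        apply fei <;>
          simp [heN, Finsupp.single_apply, Finsupp.add_apply, hNT, hNL, hTz, h1, h2]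
      · right; right; right
        apply fei <;>
          simp [heN, heL, Finsupp.single_apply, Finsupp.add_apply, hNT, hLT, hNL, hLN, hTz, h1, h2]
      · exfalso
        apply hc
        rw [show γ = eN + eN from fei _ _
          (fun j => by simp [heN, Finsupp.single_apply, Finsupp.add_apply, hNT, hTz])
          (by simp [heN, Finsupp.single_apply, Finsupp.add_apply, h1])
          (by simp [heN, Finsupp.single_apply, Finsupp.add_apply, hNL, h2])]
        exact z1
      · exfalso
        apply hc
        rw [show γ = eN + eN + eN + eN from fei _ _
          (fun j => by simp [heN, Finsupp.single_apply, Finsupp.add_apply, hNT, hTz])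
          (by simp [heN, Finsupp.single_apply, Finsupp.add_apply, h1])
          (by simp [heN, Finsupp.single_apply, Finsupp.add_apply, hNL, h2])]
        exact z3
      · exfalso
        apply hc
        rw [show γ = eN + eN + eL + eL from fei _ _
          (fun j => by simp [heN, heL, Finsupp.single_apply, Finsupp.add_apply, hNT, hLT, hTz])
          (by simp [heN, heL, Finsupp.single_apply, Finsupp.add_apply, hLN, h1])
          (by simp [heN, heL, Finsupp.single_apply, Finsupp.add_apply, hNL, h2])]
        exact z2
      · exfalso
        apply hc
        rw [show γ = eN + eL + eL + eL from fei _ _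
          (fun j => by simp [heN, heL, Finsupp.single_apply, Finsupp.add_apply, hNT, hLT, hTz])
          (by simp [heN, heL, Finsupp.single_apply, Finsupp.add_apply, hLN, h1])
          (by simp [heN, heL, Finsupp.single_apply, Finsupp.add_apply, hNL, h2])]
        exact z4
    · -- exactly one tangential variable, with exponent 1
      obtain ⟨i₀, hi1, hiz⟩ : ∃ i₀, γ (T i₀) = 1 ∧ ∀ j, j ≠ i₀ → γ (T j) = 0 := by
        have hex : ∃ i₀, 1 ≤ γ (T i₀) := by
          by_contra hno
          push_neg at hno
          have hz : ∑ j : Fin (n - 1), γ (T j) = 0 :=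
            Finset.sum_eq_zero fun j _ => by have := hno j; omega
          omega
        obtain ⟨i₀, hi₀⟩ := hex
        have hsplit : γ (T i₀) + ∑ j ∈ Finset.univ.erase i₀, γ (T j)
            = ∑ j : Fin (n - 1), γ (T j) :=
          Finset.add_sum_erase Finset.univ (fun j => γ (T j)) (Finset.mem_univ i₀)
        have herz : ∑ j ∈ Finset.univ.erase i₀, γ (T j) = 0 := by omega
        refine ⟨i₀, by omega, fun j hj => ?_⟩
        exact (Finset.sum_eq_zero_iff.mp herz) j (Finset.mem_erase.mpr ⟨hj, Finset.mem_univ j⟩)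
      rw [hs1] at hw
      have hkey : (γ N = 1 ∧ γ L = 0) ∨ (γ N = 2 ∧ γ L = 0) := by omega
      have hTv : ∀ j, γ (T j) = if i₀ = j then 1 else 0 := by
        intro j
        rcases eq_or_ne j i₀ with rfl | hj
        · simp [hi1]
        · simp [hiz j hj, Ne.symm hj]
      rcases hkey with ⟨h1, h2⟩ | ⟨h1, h2⟩
      · right; left
        refine ⟨i₀, fei _ _ ?_ ?_ ?_⟩
        · intro j
          simp [heN, Finsupp.single_apply, Finsupp.add_apply, hNT, hTT, hTv j]
        · simp [heN, Finsupp.single_apply, Finsupp.add_apply, hTN, h1]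
        · simp [heN, Finsupp.single_apply, Finsupp.add_apply, hNL, hTL, h2]
      · exfalso
        apply hc
        rw [show γ = Finsupp.single (T i₀) 1 + eN + eN from fei _ _
          (fun j => by simp [heN, Finsupp.single_apply, Finsupp.add_apply, hNT, hTT, hTv j])
          (by simp [heN, Finsupp.single_apply, Finsupp.add_apply, hTN, h1])
          (by simp [heN, Finsupp.single_apply, Finsupp.add_apply, hNL, hTL, h2])]
        exact z5 i₀
    -- the model polynomial R
  obtain ⟨a0, ha0⟩ : ∃ a0 : ℝ, a0 = MvPolynomial.coeff eN P := ⟨_, rfl⟩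
  obtain ⟨aT, haT⟩ : ∃ aT : Fin (n - 1) → ℝ,
      aT = fun i => MvPolynomial.coeff (Finsupp.single (T i) 1 + eN) P := ⟨_, rfl⟩
  obtain ⟨b, hb⟩ : ∃ b : ℝ, b = MvPolynomial.coeff (eN + eN + eN) P := ⟨_, rfl⟩
  obtain ⟨R, hR⟩ : ∃ R : MvPolynomial (Fin (n + 1)) ℝ,
      R = MvPolynomial.monomial eN a0
        + ∑ i : Fin (n - 1), MvPolynomial.monomial (Finsupp.single (T i) 1 + eN) (aT i)
        + MvPolynomial.monomial (eN + eN + eN) b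
        + MvPolynomial.monomial (eN + eL + eL) (-3 * b) := ⟨_, rfl⟩
  -- shape comparison helpers
  have dTT : ∀ i j : Fin (n - 1),
      (Finsupp.single (T i) 1 + eN = Finsupp.single (T j) 1 + eN) ↔ i = j := by
    intro i j
    rw [add_left_inj, Finsupp.single_left_inj one_ne_zero, hTT]
  have hcoeff : ∀ γ, MvPolynomial.coeff γ P = MvPolynomial.coeff γ R := by
    intro γ
    rw [hR]
    simp only [MvPolynomial.coeff_add, MvPolynomial.coeff_sum, MvPolynomial.coeff_monomial]
    by_cases h1 : γ = eN
    · subst h1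
      rw [if_pos rfl]
      have d2 : ∀ i : Fin (n - 1), ¬(Finsupp.single (T i) 1 + eN = eN) := fun i h => by
        have := DFunLike.congr_fun h (T i)
        simp [heN, Finsupp.add_apply, Finsupp.single_apply, hNT] at this
      have d3 : ¬(eN + eN + eN = eN) := fun h => by
        have := DFunLike.congr_fun h N
        simp [heN, Finsupp.add_apply, Finsupp.single_apply] at this
      have d4 : ¬(eN + eL + eL = eN) := fun h => by
        have := DFunLike.congr_fun h L
        simp [heN, heL, Finsupp.add_apply, Finsupp.single_apply, hNL] at this
      rw [Finset.sum_eq_zero fun i _ => if_neg (d2 i), if_neg d3, if_neg d4]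
      simpa using ha0.symm
    by_cases h2 : ∃ i, γ = Finsupp.single (T i) 1 + eN
    · obtain ⟨i₀, rfl⟩ := h2
      have d1 : ¬(eN = Finsupp.single (T i₀) 1 + eN) := fun h => by
        have := DFunLike.congr_fun h (T i₀)
        simp [heN, Finsupp.add_apply, Finsupp.single_apply, hNT] at this
      have d3 : ¬(eN + eN + eN = Finsupp.single (T i₀) 1 + eN) := fun h => by
        have := DFunLike.congr_fun h (T i₀)
        simp [heN, Finsupp.add_apply, Finsupp.single_apply, hNT] at this
      have d4 : ¬(eN + eL + eL = Finsupp.single (T i₀) 1 + eN) := fun h => by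
        have := DFunLike.congr_fun h (T i₀)
        simp [heN, heL, Finsupp.add_apply, Finsupp.single_apply, hNT, hLT] at this
      rw [if_neg d1, if_neg d3, if_neg d4]
      simp only [dTT]
      rw [Finset.sum_ite_eq' Finset.univ i₀ aT]
      simp [haT]
    by_cases h3 : γ = eN + eN + eN
    · subst h3
      have d1 : ¬(eN = eN + eN + eN) := fun h => by
        have := DFunLike.congr_fun h N
        simp [heN, Finsupp.add_apply, Finsupp.single_apply] at this
      have d2 : ∀ i : Fin (n - 1), ¬(Finsupp.single (T i) 1 + eN = eN + eN + eN) := fun i h => by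
        have := DFunLike.congr_fun h (T i)
        simp [heN, Finsupp.add_apply, Finsupp.single_apply, hNT] at this
      have d4 : ¬(eN + eL + eL = eN + eN + eN) := fun h => by
        have := DFunLike.congr_fun h L
        simp [heN, heL, Finsupp.add_apply, Finsupp.single_apply, hNL] at this
      rw [if_neg d1, Finset.sum_eq_zero fun i _ => if_neg (d2 i), if_pos rfl, if_neg d4]
      simpa using hb.symm
    by_cases h4' : γ = eN + eL + eL
    · subst h4'
      have d1 : ¬(eN = eN + eL + eL) := fun h => by
        have := DFunLike.congr_fun h L
        simp [heN, heL, Finsupp.add_apply, Finsupp.single_apply, hNL] at this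
      have d2 : ∀ i : Fin (n - 1), ¬(Finsupp.single (T i) 1 + eN = eN + eL + eL) := fun i h => by
        have := DFunLike.congr_fun h (T i)
        simp [heN, heL, Finsupp.add_apply, Finsupp.single_apply, hNT, hLT] at this
      have d3 : ¬(eN + eN + eN = eN + eL + eL) := fun h => by
        have := DFunLike.congr_fun h L
        simp [heN, heL, Finsupp.add_apply, Finsupp.single_apply, hNL] at this
      rw [if_neg d1, Finset.sum_eq_zero fun i _ => if_neg (d2 i), if_neg d3, if_pos rfl]
      rw [rel, ← hb]
      ring
    · -- γ is none of the four shapes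
      have hP0 : MvPolynomial.coeff γ P = 0 := by
        by_contra hc
        rcases hclass γ (MvPolynomial.mem_support_iff.mpr hc) with h | h | h | h
        · exact h1 h
        · exact h2 h
        · exact h3 h
        · exact h4' h
      rw [hP0, if_neg (fun h => h1 h.symm),
        Finset.sum_eq_zero fun i _ => if_neg (fun h => h2 ⟨i, h.symm⟩),
        if_neg (fun h => h3 h.symm), if_neg (fun h => h4' h.symm)]
      norm_num
  have hPR : P = R := MvPolynomial.ext _ _ hcoeff
  -- evaluation of R
  have hXmon : ∀ k : Fin (n + 1),
      (MvPolynomial.X k : MvPolynomial (Fin (n + 1)) ℝ)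
        = MvPolynomial.monomial (Finsupp.single k 1) 1 := fun k => rfl
  have hx1 : MvPolynomial.monomial eN a0 = MvPolynomial.C a0 * MvPolynomial.X N := by
    rw [heN, hXmon, MvPolynomial.C_mul_monomial, mul_one]
  have hx2 : ∀ i : Fin (n - 1), MvPolynomial.monomial (Finsupp.single (T i) 1 + eN) (aT i)
      = MvPolynomial.C (aT i) * (MvPolynomial.X (T i) * MvPolynomial.X N) := by
    intro i
    rw [heN, hXmon, hXmon, MvPolynomial.monomial_mul, MvPolynomial.C_mul_monomial]
    norm_num
  have hx3 : MvPolynomial.monomial (eN + eN + eN) b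
      = MvPolynomial.C b * (MvPolynomial.X N * MvPolynomial.X N * MvPolynomial.X N) := by
    rw [heN, hXmon, MvPolynomial.monomial_mul, MvPolynomial.monomial_mul,
      MvPolynomial.C_mul_monomial]
    norm_num
  have hx4 : MvPolynomial.monomial (eN + eL + eL) (-3 * b)
      = MvPolynomial.C (-3 * b)
          * (MvPolynomial.X N * MvPolynomial.X L * MvPolynomial.X L) := by
    rw [heN, heL, hXmon, hXmon, MvPolynomial.monomial_mul, MvPolynomial.monomial_mul,
      MvPolynomial.C_mul_monomial]
    norm_num
  have heval : ∀ y : Euc n, MvPolynomial.eval (fun i => y i) P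
      = a0 * y N + (∑ i, aT i * y (T i) * y N) + b * ((y N) ^ 3 - 3 * y N * (y L) ^ 2) := by
    intro y
    rw [hPR, hR, hx1, hx3, hx4]
    simp only [hx2, map_add, map_mul, map_sum, MvPolynomial.eval_C, MvPolynomial.eval_X]
    have hs : ∑ i : Fin (n - 1), aT i * (y (T i) * y N) = ∑ i : Fin (n - 1), aT i * y (T i) * y N :=
      Finset.sum_congr rfl fun i _ => by ring
    rw [hs]
    ring
  -- weighted degrees of the four shapes
  have hsum_ite : ∀ (i : Fin (n - 1)) (c : ℕ), (∑ j : Fin (n - 1), if i = j then c else 0) = c :=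
    fun i c => by simp
  have w1 : wdeg n eN = 1 := by
    unfold wdeg
    rw [← hNdef, ← hLdef, ← hTdef]
    simp [heN, Finsupp.single_apply, hNT, hNL]
  have w2 : ∀ i : Fin (n - 1), wdeg n (Finsupp.single (T i) 1 + eN) = 3 := by
    intro i
    unfold wdeg
    rw [← hNdef, ← hLdef, ← hTdef]
    have : ∑ j : Fin (n - 1), 2 * ((Finsupp.single (T i) 1 + eN : Fin (n + 1) →₀ ℕ) (T j))
        = 2 := by
      have he : ∀ j : Fin (n - 1), 2 * ((Finsupp.single (T i) 1 + eN : Fin (n + 1) →₀ ℕ) (T j))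
          = if i = j then 2 else 0 := by
        intro j
        rcases eq_or_ne i j with rfl | hij
        · simp [heN, Finsupp.add_apply, Finsupp.single_apply, hNT]
        · simp [heN, Finsupp.add_apply, Finsupp.single_apply, hNT, hTT, hij]
      rw [Finset.sum_congr rfl fun j _ => he j, hsum_ite i 2]
    rw [this]
    simp [heN, Finsupp.add_apply, Finsupp.single_apply, hTN, hTL, hNL]
  have w3 : wdeg n (eN + eN + eN) = 3 := by
    unfold wdeg
    rw [← hNdef, ← hLdef, ← hTdef]
    simp [heN, Finsupp.add_apply, Finsupp.single_apply, hNT, hNL]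
  have w4 : wdeg n (eN + eL + eL) = 3 := by
    unfold wdeg
    rw [← hNdef, ← hLdef, ← hTdef]
    simp [heN, heL, Finsupp.add_apply, Finsupp.single_apply, hNT, hLT, hNL, hLN]
  refine ⟨⟨a0, aT, b, ?_⟩, ?_, ?_⟩
  · intro y
    rw [heval y, hNdef, hLdef, hTdef]
  · intro hall
    rw [← MvPolynomial.support_eq_empty]
    rw [Finset.eq_empty_iff_forall_notMem]
    intro γ hγ
    have h2 := hall γ hγ
    rcases hclass γ hγ with h | ⟨i, h⟩ | h | h <;> subst h <;>
      first
        | (rw [w1] at h2; omega)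
        | (rw [w2 i] at h2; omega)
        | (rw [w3] at h2; omega)
        | (rw [w4] at h2; omega)
  · intro hall
    rw [← MvPolynomial.support_eq_empty]
    rw [Finset.eq_empty_iff_forall_notMem]
    intro γ hγ
    have h2 := hall γ hγ
    rcases hclass γ hγ with h | ⟨i, h⟩ | h | h <;> subst h <;>
      first
        | (rw [w1] at h2; omega)
        | (rw [w2 i] at h2; omega)
        | (rw [w3] at h2; omega)
        | (rw [w4] at h2; omega)


end
end
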